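/- Let 𝔫 be the 5-dimensional real Lie algebra l₅,₉ (case B) with orthonormal basis {E₁,…,E₅} and non-zero brackets [E₁,E₂] = m·E₃ + s·E₄, [E₁,E₃] = v·E₄, [E₂,E₃] = v·E₅, where m, v > 0 and s ≥ 0. Then there exist c ∈ ℝ and a derivation D of 𝔫 with Ric = c·Id + D if and only if s = 0 and v = (√3/2)·m; moreover, in that case necessarily c = −(3/2)m². -/

import Mathlib

/-
The Ricci operator is computed explicitly: it is diagonal apart from entries proportional to `s`.
If `Ric = c • id + D`, the derivation identity for `D = Ric - c • id` on `[E₁, E₂]` has an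
`E₂`-component `-m s v / 2` that must vanish, so `s = 0`; then the diagonal entries of `D` must be
additive along the brackets `[E₁, E₂]` and `[E₁, E₃]`, which forces `c = -3/2 m²` and `v² = 3/4 m²`.
Conversely, under these conditions `Ric + 3/2 m² • id` is diagonal with entries
`m²/8 • (5, 5, 10, 15, 15)`, additive along all three brackets, hence a derivation.
-/

open scoped BigOperators

namespace Nilsoliton14

noncomputable section

abbrev V : Type := Fin 5 → ℝ

/-- The orthonormal basis vectors E₁,…,E₅ (indexed 0,…,4). -/
def E (i : Fin 5) : V := Pi.single i 1

/-- The inner product making `E` an orthonormal basis. -/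
def ip (x y : V) : ℝ := ∑ i, x i * y i

/-- `D` is a derivation of the bracket `br`. -/
def IsDerivation (br : V → V → V) (D : V →ₗ[ℝ] V) : Prop :=
  ∀ X Y : V, D (br X Y) = br (D X) Y + br X (D Y)

/-- `Ric` is the Ricci operator of the nilpotent Lie group with left-invariant
metric determined by the bracket `br` and the orthonormal basis `E`. -/
def IsRicci (br : V → V → V) (Ric : V →ₗ[ℝ] V) : Prop :=
  ∀ X Y : V, ip (Ric X) Y =
      -(1/2) * (∑ i : Fin 5, ip (br X (E i)) (br Y (E i)))
      + (1/4) * (∑ i : Fin 5, ∑ j : Fin 5, ip (br (E i) (E j)) X * ip (br (E i) (E j)) Y)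

/-- The bracket of l₅,₉ (case B): [E₁,E₂] = m·E₃ + s·E₄,
[E₁,E₃] = v·E₄, [E₂,E₃] = v·E₅. -/
def br (m s v : ℝ) (X Y : V) : V :=
  (m * (X 0 * Y 1 - X 1 * Y 0)) • E 2 + (s * (X 0 * Y 1 - X 1 * Y 0) + v * (X 0 * Y 2 - X 2 * Y 0)) • E 3 + (v * (X 1 * Y 2 - X 2 * Y 1)) • E 4

lemma ip_E (x : V) (i : Fin 5) : ip x (E i) = x i := by
  simp [ip, E, Pi.single_apply]

lemma IsRicci.apply_br {m s v : ℝ} {Ric : V →ₗ[ℝ] V} (hRic : IsRicci (br m s v) Ric) (X : V) :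
    Ric X = ![-((m ^ 2 + s ^ 2 + v ^ 2) / 2) * X 0,
      -((m ^ 2 + s ^ 2 + v ^ 2) / 2) * X 1 - (s * v / 2) * X 2,
      -(s * v / 2) * X 1 + (m ^ 2 / 2 - v ^ 2) * X 2 + (m * s / 2) * X 3,
      (m * s / 2) * X 2 + ((s ^ 2 + v ^ 2) / 2) * X 3,
      (v ^ 2 / 2) * X 4] := by
  funext i
  rw [← ip_E (Ric X), hRic]
  fin_cases i <;> simp [ip, br, E, Pi.single_apply, Fin.sum_univ_five] <;> ring

lemma isDerivation_diagonal (m v : ℝ) {d : Fin 5 → ℝ} (h2 : d 2 = d 0 + d 1)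
    (h3 : d 3 = d 0 + d 2) (h4 : d 4 = d 1 + d 2) :
    IsDerivation (br m 0 v) (Matrix.toLin' (Matrix.diagonal d)) := by
  intro X Y
  funext i
  fin_cases i <;> simp [br, E, Matrix.mulVec_diagonal, h2, h3, h4] <;> ring

def nilsolitonWeights (m : ℝ) : Fin 5 → ℝ := (m ^ 2 / 8) • ![5, 5, 10, 15, 15]

lemma isDerivation_nilsolitonWeights (m v : ℝ) :
    IsDerivation (br m 0 v) (Matrix.toLin' (Matrix.diagonal (nilsolitonWeights m))) := by
  apply isDerivation_diagonal <;> simp [nilsolitonWeights] <;> ring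

lemma IsRicci.eq_smul_id_add_nilsolitonWeights {m v : ℝ} {Ric : V →ₗ[ℝ] V}
    (hRic : IsRicci (br m 0 v) Ric) (hv : v ^ 2 = 3 / 4 * m ^ 2) :
    Ric = (-(3 / 2) * m ^ 2) • LinearMap.id +
      Matrix.toLin' (Matrix.diagonal (nilsolitonWeights m)) := by
  refine LinearMap.ext fun X => funext fun i => ?_
  rw [hRic.apply_br]
  fin_cases i <;> simp [Matrix.mulVec_diagonal, nilsolitonWeights, hv] <;> ring

lemma IsRicci.nilsoliton_params {m s v c : ℝ} (hm : 0 < m) (hv : 0 < v) {Ric D : V →ₗ[ℝ] V}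
    (hRic : IsRicci (br m s v) Ric) (hD : IsDerivation (br m s v) D)
    (hRicD : Ric = c • LinearMap.id + D) : s = 0 ∧ c = -(3 / 2) * m ^ 2 ∧ v ^ 2 = 3 / 4 * m ^ 2 := by
  have hDRic : ∀ X, D X = Ric X - c • X := fun X => by simp [hRicD]
  obtain rfl : s = 0 := by
    simpa [hDRic, hRic.apply_br, br, E, hm.ne', hv.ne'] using congrFun (hD (E 0) (E 1)) 1
  have h12 : m * (m ^ 2 / 2 - v ^ 2 - c) = m * (-(m ^ 2 + v ^ 2) - 2 * c) := by
    have h := congrFun (hD (E 0) (E 1)) 2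
    simp [hDRic, hRic.apply_br, br, E] at h
    linear_combination h
  have h13 : v * (v ^ 2 / 2 - c) = v * (-(3 / 2) * v ^ 2 - 2 * c) := by
    have h := congrFun (hD (E 0) (E 2)) 3
    simp [hDRic, hRic.apply_br, br, E] at h
    linear_combination h
  have hc : c = -(3 / 2) * m ^ 2 := by
    linarith [mul_left_cancel₀ hm.ne' h12]
  refine ⟨rfl, hc, ?_⟩
  linarith [mul_left_cancel₀ hv.ne' h13]

lemma eq_sqrt_three_div_two_mul_iff {m v : ℝ} (hm : 0 ≤ m) (hv : 0 ≤ v) :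
    v = √3 / 2 * m ↔ v ^ 2 = 3 / 4 * m ^ 2 := by
  rw [← sq_eq_sq₀ hv (by positivity), mul_pow, div_pow, Real.sq_sqrt (by norm_num)]
  norm_num

theorem stmt14_general (m s v : ℝ) (hm : 0 < m) (hv : 0 < v)
    (Ric : V →ₗ[ℝ] V) (hRic : IsRicci (br m s v) Ric) :
    ((∃ (c : ℝ) (D : V →ₗ[ℝ] V), IsDerivation (br m s v) D ∧
        Ric = c • (LinearMap.id : V →ₗ[ℝ] V) + D) ↔ (s = 0 ∧ v = (Real.sqrt 3 / 2) * m)) ∧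
    (∀ (c : ℝ) (D : V →ₗ[ℝ] V), IsDerivation (br m s v) D →
        Ric = c • (LinearMap.id : V →ₗ[ℝ] V) + D → c = -(3/2) * m ^ 2) := by
  simp_rw [eq_sqrt_three_div_two_mul_iff hm.le hv.le]
  refine ⟨⟨?_, ?_⟩, fun c D hD hRicD => (hRic.nilsoliton_params hm hv hD hRicD).2.1⟩
  · rintro ⟨c, D, hD, hRicD⟩
    obtain ⟨hs, -, hv⟩ := hRic.nilsoliton_params hm hv hD hRicD
    exact ⟨hs, hv⟩
  · rintro ⟨rfl, hv⟩
    exact ⟨_, _, isDerivation_nilsolitonWeights m v, hRic.eq_smul_id_add_nilsolitonWeights hv⟩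

theorem stmt14 (m s v : ℝ) (hm : 0 < m) (hv : 0 < v) (hs : 0 ≤ s)
    (Ric : V →ₗ[ℝ] V) (hRic : IsRicci (br m s v) Ric) :
    ((∃ (c : ℝ) (D : V →ₗ[ℝ] V), IsDerivation (br m s v) D ∧
        Ric = c • (LinearMap.id : V →ₗ[ℝ] V) + D) ↔ (s = 0 ∧ v = (Real.sqrt 3 / 2) * m)) ∧
    (∀ (c : ℝ) (D : V →ₗ[ℝ] V), IsDerivation (br m s v) D →
        Ric = c • (LinearMap.id : V →ₗ[ℝ] V) + D → c = -(3/2) * m ^ 2) :=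
  stmt14_general m s v hm hv Ric hRic

end

end Nilsoliton14
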